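/- Let n ≥ 1 and put m = 2n+1. Let F be a central maximal intersecting subfamily of P([m]), and let G be an intersecting family of n-element subsets of [m] with |G| ≤ (1/2)·binom(2n, n). Then H = (F \ G*) ∪ G is an ∅-minimal maximal intersecting subfamily of P([m]). -/

import Mathlib

open Finset

variable {m : ℕ}

/-- A family of finsets is intersecting if any two members meet. -/
def IsIntersecting (F : Finset (Finset (Fin m))) : Prop :=
  ∀ A ∈ F, ∀ B ∈ F, (A ∩ B).Nonempty

/-- A maximal intersecting subfamily of the power set of `Fin m`. -/
def IsMaxIntersecting (F : Finset (Finset (Fin m))) : Prop :=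
  IsIntersecting F ∧ ∀ G : Finset (Finset (Fin m)), IsIntersecting G → F ⊆ G → G ⊆ F

/-- A family is subset-closed if it contains all subsets of its members. -/
def IsSubsetClosed (F : Finset (Finset (Fin m))) : Prop :=
  ∀ A ∈ F, ∀ B ⊆ A, B ∈ F

/-- The embedding of a family into `ℝ^{P([m])}`. -/
def famVec (F : Finset (Finset (Fin m))) : Finset (Fin m) → ℝ := fun A =>
  if A ∈ F ∧ Aᶜ ∉ F then 1 else if A ∉ F ∧ Aᶜ ∈ F then -1 else 0

/-- The standard basis vector `e_A` of `ℝ^{P([m])}`. -/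
def stdBasis (A : Finset (Fin m)) : Finset (Fin m) → ℝ := fun B => if B = A then 1 else 0

/-- The star of a family centered at `a`. -/
def starFam (a : Fin m) (F : Finset (Finset (Fin m))) : Finset (Finset (Fin m)) :=
  F.filter fun A => a ∈ A

/-- The setwise complement (dual) `F* = {Aᶜ : A ∈ F}`. -/
def dualFam (F : Finset (Finset (Fin m))) : Finset (Finset (Fin m)) :=
  F.image fun A => Aᶜ

/-- `Tpath σ C k = C △ {σ(1), …, σ(k)}` (0-indexed: the images of the first `k` indices). -/
def Tpath (σ : Equiv.Perm (Fin m)) (C : Finset (Fin m)) (k : ℕ) : Finset (Fin m) :=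
  symmDiff C ((Finset.univ.filter fun i : Fin m => (i : ℕ) < k).image σ)

/-- The path-sum `Λ(H)` as a vector in `ℝ^{P([m]) × P([m])}`: at coordinate `(X, Y)` it is the
number of triples `(σ, C, k)` whose `k`-th path step goes from `X` to `Y`, minus the number of
triples whose `k`-th step goes from `Y` to `X`. -/
def LamW (H : Finset (Finset (Fin m))) (X Y : Finset (Fin m)) : ℝ :=
  ∑ σ : Equiv.Perm (Fin m), ∑ C ∈ H, ∑ k ∈ Finset.Icc 1 m,
    ((if Tpath σ C (k - 1) = X ∧ Tpath σ C k = Y then (1 : ℝ) else 0)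
      - (if Tpath σ C (k - 1) = Y ∧ Tpath σ C k = X then (1 : ℝ) else 0))

/-- A maximal intersecting family `F` is `∅`-minimal if for every `a`, the coordinate
`Λ(F*)_{(∅,{a})}` is the minimum of `Λ(F*)_{(A, A ∪ {a})}` over all `A ⊆ [m] \ {a}`. -/
def EmptyMinimal (F : Finset (Finset (Fin m))) : Prop :=
  ∀ a : Fin m, ∀ A : Finset (Fin m), a ∉ A →
    LamW (dualFam F) ∅ {a} ≤ LamW (dualFam F) A (insert a A)

open scoped Nat symmDiff

/-!
A triple `(σ, C, k)` crosses the edge `X → X ∪ {a}` exactly when `σ k = a` and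
`C = X ∆ {σ 1, …, σ (k - 1)}`. Counting permutations that put a prescribed set `S` before `a`
(there are `|S|! (m - 1 - |S|)!` of them) turns `Λ(H*)_{(X, X ∪ {a})}` into
`∑ (|X ∆ Q|)! (m - 1 - |X ∆ Q|)!` over the sets `Q ⊆ [m] \ {a}` with `Q ∉ H`,
`Q ∪ {a} ∈ H` (a maximal intersecting family is an up-set). For `m = 2n + 1` the weight
`d! (2n - d)!` is smallest at `d = n` and next smallest at `d = n ± 1`.

A central maximal intersecting family is `{A : |A| > n}`, and for `H = (F \ G*) ∪ G` these
sets `Q` have size `n - 1`, `n` or `n + 1`; there are at least as many of size `n` as of the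
other sizes because `2|G| ≤ binom(2n, n)`. Comparing `X` with `∅` term by term, split by the
parity of `|X|`, gives `∅`-minimality.
-/

theorem card_filter_perm_comp_eq {α ι : Type*} [Fintype α] [DecidableEq α] [Fintype ι]
    [DecidableEq ι] {f g : α → ι} (h : ∀ i, #{x | f x = i} = #{x | g x = i}) :
    #{σ : Equiv.Perm α | g ∘ σ = f} = ∏ i, (#{x | f x = i})! := by
  have e (i : ι) : {x // f x = i} ≃ {x // g x = i} :=
    Fintype.equivOfCardEq (by rw [Fintype.card_subtype, Fintype.card_subtype, h])
  let σ₀ : Equiv.Perm α := (Equiv.sigmaFiberEquiv f).symm.trans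
    ((Equiv.sigmaCongrRight e).trans (Equiv.sigmaFiberEquiv g))
  have hσ₀ (x : α) : g (σ₀ x) = f x := (e (f x) ⟨x, rfl⟩).2
  calc #{σ : Equiv.Perm α | g ∘ σ = f}
      = #{τ : Equiv.Perm α | f ∘ τ = f} := by
        refine card_nbij' (σ₀⁻¹ * ·) (σ₀ * ·) (fun σ hσ => ?_) (fun τ hτ => ?_)
          (fun _ _ => by simp) (fun _ _ => by simp)
        · simp only [coe_filter, mem_univ, true_and, Set.mem_ofPred_eq] at hσ ⊢
          ext x
          show f (σ₀⁻¹ (σ x)) = f x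
          rw [← hσ₀, ← Equiv.Perm.mul_apply, mul_inv_cancel, Equiv.Perm.one_apply]
          exact congrFun hσ x
        · simp only [coe_filter, mem_univ, true_and, Set.mem_ofPred_eq] at hτ ⊢
          ext x
          show g (σ₀ (τ x)) = f x
          rw [hσ₀]
          exact congrFun hτ x
    _ = ∏ i, (#{x | f x = i})! := by
        simp only [← Fintype.card_subtype, DomMulAct.stabilizer_card]

/-- `firstValues σ k = {σ 0, …, σ (k - 1)}`. -/
def firstValues (σ : Equiv.Perm (Fin m)) (k : ℕ) : Finset (Fin m) :=
  {x | (σ.symm x : ℕ) < k}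

lemma firstValues_eq_image (σ : Equiv.Perm (Fin m)) (k : ℕ) :
    firstValues σ k = ({i | (i : ℕ) < k} : Finset (Fin m)).image σ := by
  ext x
  simp only [firstValues, mem_image, mem_filter, mem_univ, true_and]
  exact ⟨fun hx => ⟨σ.symm x, hx, by simp⟩,
    fun ⟨i, hi, hx⟩ => by simpa [← hx] using hi⟩

lemma card_firstValues (σ : Equiv.Perm (Fin m)) {k : ℕ} (hk : k ≤ m) :
    #(firstValues σ k) = k := by
  rw [firstValues_eq_image, card_image_of_injective _ σ.injective, Fin.card_filter_val_lt,
    min_eq_right hk]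

lemma Tpath_eq (σ : Equiv.Perm (Fin m)) (C : Finset (Fin m)) (k : ℕ) :
    Tpath σ C k = C ∆ firstValues σ k := by
  rw [firstValues_eq_image]
  rfl

lemma Tpath_succ (σ : Equiv.Perm (Fin m)) (C : Finset (Fin m)) (i : Fin m) :
    Tpath σ C (i + 1) = Tpath σ C i ∆ {σ i} := by
  rw [Tpath_eq, Tpath_eq, symmDiff_assoc]
  congr 1
  ext x
  simp only [firstValues, mem_filter, mem_univ, true_and, mem_symmDiff, mem_singleton,
    ← Equiv.symm_apply_eq, Fin.ext_iff]
  omega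

lemma Tpath_step_iff (σ : Equiv.Perm (Fin m)) (C : Finset (Fin m)) (i : Fin m)
    {X Y : Finset (Fin m)} {a : Fin m} (hXY : X ∆ Y = {a}) :
    Tpath σ C i = X ∧ Tpath σ C (i + 1) = Y ↔ C = X ∆ firstValues σ i ∧ σ i = a := by
  have hC : C ∆ firstValues σ i = X ↔ C = X ∆ firstValues σ i :=
    ⟨fun h => by rw [← h, symmDiff_symmDiff_cancel_right],
      fun h => by rw [h, symmDiff_symmDiff_cancel_right]⟩
  have hstep : X ∆ {σ i} = Y ↔ σ i = a := by
    rw [← singleton_inj (a := σ i), ← hXY]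
    exact ⟨fun h => by rw [← h, symmDiff_symmDiff_cancel_left],
      fun h => by rw [h, symmDiff_symmDiff_cancel_left]⟩
  rw [Tpath_succ, Tpath_eq]
  constructor
  · rintro ⟨hX, hY⟩
    rw [hX] at hY
    exact ⟨hC.1 hX, hstep.1 hY⟩
  · rintro ⟨hX, ha⟩
    exact ⟨hC.2 hX, by rw [hC.2 hX, hstep.2 ha]⟩

lemma sum_Icc_one_eq_sum_fin {M : Type*} [AddCommMonoid M] (f : ℕ → M) :
    ∑ k ∈ Icc 1 m, f k = ∑ i : Fin m, f (i + 1) := by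
  rw [← Ico_add_one_right_eq_Icc, sum_Ico_eq_sum_range,
    Fin.sum_univ_eq_sum_range (fun i => f (i + 1))]
  simp [add_comm]

lemma sum_Tpath_step (H : Finset (Finset (Fin m))) (σ : Equiv.Perm (Fin m)) (i : Fin m)
    {X Y : Finset (Fin m)} {a : Fin m} (hXY : X ∆ Y = {a}) :
    ∑ C ∈ H, (if Tpath σ C i = X ∧ Tpath σ C (i + 1) = Y then (1 : ℝ) else 0) =
      if σ i = a ∧ X ∆ firstValues σ i ∈ H then 1 else 0 := by
  simp_rw [Tpath_step_iff σ _ i hXY]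
  by_cases ha : σ i = a <;> simp [ha, sum_ite_eq']

lemma lamW_eq_sum_perm (H : Finset (Finset (Fin m))) {X Y : Finset (Fin m)} {a : Fin m}
    (hXY : X ∆ Y = {a}) :
    LamW H X Y = ∑ σ : Equiv.Perm (Fin m),
      ((if X ∆ firstValues σ (σ.symm a) ∈ H then (1 : ℝ) else 0) -
        (if Y ∆ firstValues σ (σ.symm a) ∈ H then 1 else 0)) := by
  have hYX : Y ∆ X = {a} := by rw [symmDiff_comm, hXY]
  refine sum_congr rfl fun σ _ => ?_
  rw [sum_comm, sum_Icc_one_eq_sum_fin, Fintype.sum_eq_single (σ.symm a)]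
  · simp only [Nat.add_sub_cancel, sum_sub_distrib, sum_Tpath_step H σ _ hXY,
      sum_Tpath_step H σ _ hYX, Equiv.apply_symm_apply, true_and]
  · intro i hi
    have ha : σ i ≠ a := fun h => hi (by rw [← h, Equiv.symm_apply_apply])
    simp only [Nat.add_sub_cancel, sum_sub_distrib, sum_Tpath_step H σ _ hXY,
      sum_Tpath_step H σ _ hYX, ha, false_and, if_false, sub_zero]

def permWeight (m d : ℕ) : ℕ := d ! * (m - 1 - d)!

def beforeLabel (S : Finset (Fin m)) (a x : Fin m) : Ordering :=
  if x ∈ S then .lt else if x = a then .eq else .gt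

lemma firstValues_symm_apply_eq_iff {σ : Equiv.Perm (Fin m)} {a : Fin m} {S : Finset (Fin m)}
    (haS : a ∉ S) (hSm : #S < m) :
    firstValues σ (σ.symm a) = S ↔
      beforeLabel S a ∘ σ = (compare · (⟨#S, hSm⟩ : Fin m)) := by
  set J : Fin m := ⟨#S, hSm⟩
  constructor
  · intro h
    have hJ : σ.symm a = J := Fin.ext (by rw [← card_firstValues σ (σ.symm a).isLt.le, h])
    have hmem (i : Fin m) : σ i ∈ S ↔ i < J := by
      rw [← h, firstValues, mem_filter, hJ, Equiv.symm_apply_apply, Fin.lt_def]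
      simp
    have haJ : σ J = a := by rw [← hJ, Equiv.apply_symm_apply]
    funext i
    simp only [Function.comp_apply, beforeLabel]
    rcases lt_trichotomy i J with hi | rfl | hi
    · simp [(hmem i).2 hi, compare_lt_iff_lt.2 hi]
    · simp [haJ, haS]
    · have hne : σ i ≠ a := fun h' => hi.ne' (by rw [← hJ, ← h', Equiv.symm_apply_apply])
      simp [(hmem i).not.2 (not_lt.2 hi.le), hne, compare_gt_iff_gt.2 hi]
  · intro h
    have hlabel (x : Fin m) : beforeLabel S a x = compare (σ.symm x) J := by
      simpa using congrFun h (σ.symm x)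
    have hJ : σ.symm a = J := by simpa [beforeLabel, haS] using (hlabel a).symm
    ext x
    rw [firstValues, mem_filter, hJ, ← Fin.lt_def, ← compare_lt_iff_lt, ← hlabel]
    by_cases hx : x ∈ S <;> simp [beforeLabel, hx]

lemma card_filter_beforeLabel_eq {a : Fin m} {S : Finset (Fin m)} (hS : S ⊆ univ.erase a)
    (hSm : #S < m) (o : Ordering) :
    #{x | beforeLabel S a x = o} = #{i : Fin m | compare i ⟨#S, hSm⟩ = o} := by
  have hSa (x : Fin m) (hx : x ∈ S) : x ≠ a := by simpa using hS hx
  cases o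
  · rw [show ({x | beforeLabel S a x = .lt} : Finset _) = S by
      ext x; by_cases x ∈ S <;> simp [beforeLabel, *]]
    simp [compare_lt_iff_lt, filter_gt_eq_Iio]
  · rw [show ({x | beforeLabel S a x = .eq} : Finset _) = {a} by
      ext x; by_cases x ∈ S <;> simp [beforeLabel, *]]
    simp [filter_eq']
  · rw [show ({x | beforeLabel S a x = .gt} : Finset _) = univ.erase a \ S by
      ext x; by_cases x ∈ S <;> simp [beforeLabel, *]]
    rw [card_sdiff_of_subset hS, card_erase_of_mem (mem_univ a), card_univ, Fintype.card_fin]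
    simp [compare_gt_iff_gt, filter_lt_eq_Ioi]

lemma prod_factorial_card_filter_compare (J : Fin m) :
    ∏ o, (#{i : Fin m | compare i J = o})! = permWeight m J := by
  rw [show (univ : Finset Ordering) = {.lt, .eq, .gt} by decide]
  simp [compare_lt_iff_lt, compare_gt_iff_gt, filter_gt_eq_Iio, filter_lt_eq_Ioi, filter_eq',
    permWeight]

lemma card_filter_firstValues_symm_apply_eq {a : Fin m} {S : Finset (Fin m)}
    (hS : S ⊆ univ.erase a) :
    #{σ : Equiv.Perm (Fin m) | firstValues σ (σ.symm a) = S} = permWeight m #S := by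
  have haS : a ∉ S := fun h => by simpa using hS h
  have hSm : #S < m := by
    have := card_le_card hS
    rw [card_erase_of_mem (mem_univ a), card_univ, Fintype.card_fin] at this
    have : 0 < m := Fin.pos a
    omega
  rw [filter_congr fun σ _ => firstValues_symm_apply_eq_iff haS hSm,
    card_filter_perm_comp_eq fun o => (card_filter_beforeLabel_eq hS hSm o).symm,
    prod_factorial_card_filter_compare]

lemma firstValues_symm_apply_subset (σ : Equiv.Perm (Fin m)) (a : Fin m) :
    firstValues σ (σ.symm a) ⊆ univ.erase a := by
  intro x hx
  simp only [firstValues, mem_filter] at hx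
  exact mem_erase.2 ⟨by rintro rfl; exact lt_irrefl _ hx.2, mem_univ x⟩

lemma sum_perm_firstValues_symm_apply (f : Finset (Fin m) → ℝ) (a : Fin m) :
    ∑ σ : Equiv.Perm (Fin m), f (firstValues σ (σ.symm a)) =
      ∑ S ∈ (univ.erase a).powerset, (permWeight m #S : ℝ) * f S := by
  rw [← sum_fiberwise_of_maps_to (t := (univ.erase a).powerset)
    (fun σ _ => mem_powerset.2 (firstValues_symm_apply_subset σ a))]
  refine sum_congr rfl fun S hS => ?_
  rw [sum_congr rfl fun σ hσ => by rw [(mem_filter.1 hσ).2], sum_const,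
    card_filter_firstValues_symm_apply_eq (mem_powerset.1 hS), nsmul_eq_mul]

lemma permWeight_sub (m : ℕ) {d : ℕ} (hd : d ≤ m - 1) :
    permWeight m (m - 1 - d) = permWeight m d := by
  rw [permWeight, permWeight, Nat.sub_sub_self hd, mul_comm]

lemma mem_dualFam {F : Finset (Finset (Fin m))} {C : Finset (Fin m)} :
    C ∈ dualFam F ↔ Cᶜ ∈ F := by
  simp only [dualFam, mem_image]
  exact ⟨fun ⟨A, hA, hAC⟩ => by rwa [← hAC, compl_compl],
    fun h => ⟨Cᶜ, h, compl_compl C⟩⟩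

lemma compl_insert_eq_erase_sdiff (a : Fin m) (Y : Finset (Fin m)) :
    (insert a Y)ᶜ = univ.erase a \ Y := by
  ext x; simp [and_comm]

lemma compl_eq_insert_erase_sdiff {a : Fin m} {Y : Finset (Fin m)} (ha : a ∉ Y) :
    Yᶜ = insert a (univ.erase a \ Y) := by
  ext x; by_cases hx : x = a <;> simp [hx, ha]

lemma symmDiff_sdiff_eq_sdiff_symmDiff {α : Type*} [DecidableEq α] {U X Y : Finset α}
    (hX : X ⊆ U) (hY : Y ⊆ U) : X ∆ (U \ Y) = U \ (X ∆ Y) := by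
  ext x
  by_cases hx : x ∈ U
  · simp [mem_symmDiff, hx]; tauto
  · have hxX : x ∉ X := fun h => hx (hX h)
    have hxY : x ∉ Y := fun h => hx (hY h)
    simp [mem_symmDiff, hx, hxX, hxY]

lemma lamW_dualFam_insert (H : Finset (Finset (Fin m))) {a : Fin m} {X : Finset (Fin m)}
    (hX : a ∉ X) :
    LamW (dualFam H) X (insert a X) = ∑ Q ∈ (univ.erase a).powerset,
      (permWeight m #(X ∆ Q) : ℝ) *
        ((if insert a Q ∈ H then 1 else 0) - (if Q ∈ H then 1 else 0)) := by
  set U := univ.erase a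
  have hXa : X ∆ insert a X = {a} := by
    ext x; by_cases hx : x = a <;> simp [mem_symmDiff, hx, hX]
  have hXU : X ⊆ U := fun x hx => mem_erase.2 ⟨by rintro rfl; exact hX hx, mem_univ x⟩
  have hflip (S : Finset (Fin m)) (hS : S ⊆ U) : X ∆ (U \ (X ∆ S)) = U \ S := by
    rw [symmDiff_sdiff_eq_sdiff_symmDiff hXU (symmDiff_le_sup.trans (sup_le hXU hS)),
      symmDiff_symmDiff_cancel_left]
  rw [lamW_eq_sum_perm _ hXa, sum_perm_firstValues_symm_apply (fun S =>
    (if X ∆ S ∈ dualFam H then (1 : ℝ) else 0) -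
      (if insert a X ∆ S ∈ dualFam H then 1 else 0))]
  refine sum_nbij' (fun S => U \ (X ∆ S)) (fun Q => U \ (X ∆ Q))
    (fun _ _ => mem_powerset.2 sdiff_subset) (fun _ _ => mem_powerset.2 sdiff_subset)
    (fun S hS => by
      rw [hflip S (mem_powerset.1 hS), Finset.sdiff_sdiff_eq_self (mem_powerset.1 hS)])
    (fun S hS => by
      rw [hflip S (mem_powerset.1 hS), Finset.sdiff_sdiff_eq_self (mem_powerset.1 hS)])
    fun S hS => ?_
  rw [mem_powerset] at hS
  have haS : a ∉ S := fun h => by simpa [U] using hS h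
  have haXS : a ∉ X ∆ S := fun h => by simpa [U] using symmDiff_le_sup.trans (sup_le hXU hS) h
  have hins : insert a X ∆ S = insert a (X ∆ S) := by
    ext x; by_cases hx : x = a <;> simp [mem_symmDiff, hx, haS]
  have hcard : #S ≤ m - 1 := by simpa [U] using card_le_card hS
  rw [hflip S hS, card_sdiff_of_subset hS, card_erase_of_mem (mem_univ a), card_univ,
    Fintype.card_fin, permWeight_sub m hcard]
  simp only [hins, mem_dualFam, compl_insert_eq_erase_sdiff, compl_eq_insert_erase_sdiff haXS, U]

lemma IsMaxIntersecting.mem_of_subset {H : Finset (Finset (Fin m))} (hH : IsMaxIntersecting H)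
    {A B : Finset (Fin m)} (hA : A ∈ H) (hAB : A ⊆ B) : B ∈ H := by
  have hB (C : Finset (Fin m)) (hC : C ∈ H) : (B ∩ C).Nonempty :=
    (hH.1 A hA C hC).mono (inter_subset_inter_right hAB)
  refine hH.2 (insert B H) (fun C hC D hD => ?_) (subset_insert B H) (mem_insert_self B H)
  rcases mem_insert.1 hC with rfl | hCH <;> rcases mem_insert.1 hD with rfl | hDH
  · exact (hB A hA).mono (inter_subset_inter_left hAB)
  · exact hB D hDH
  · exact inter_comm C D ▸ hB C hCH
  · exact hH.1 C hCH D hDH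

def pivotalSets (H : Finset (Finset (Fin m))) (a : Fin m) : Finset (Finset (Fin m)) :=
  (univ.erase a).powerset.filter fun Q => insert a Q ∈ H ∧ Q ∉ H

lemma IsMaxIntersecting.lamW_dualFam_insert_eq_sum_pivotalSets {H : Finset (Finset (Fin m))}
    (hH : IsMaxIntersecting H) {a : Fin m} {X : Finset (Fin m)} (hX : a ∉ X) :
    LamW (dualFam H) X (insert a X) =
      ∑ Q ∈ pivotalSets H a, (permWeight m #(X ∆ Q) : ℝ) := by
  rw [lamW_dualFam_insert H hX, pivotalSets, sum_filter]
  refine sum_congr rfl fun Q _ => ?_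
  by_cases hQ : Q ∈ H
  · simp [hQ, hH.mem_of_subset hQ (subset_insert a Q)]
  · by_cases hQa : insert a Q ∈ H <;> simp [hQ, hQa]

lemma IsMaxIntersecting.emptyMinimal_iff {H : Finset (Finset (Fin m))}
    (hH : IsMaxIntersecting H) :
    EmptyMinimal H ↔ ∀ (a : Fin m) (X : Finset (Fin m)), a ∉ X →
      ∑ Q ∈ pivotalSets H a, (permWeight m #Q : ℝ) ≤
        ∑ Q ∈ pivotalSets H a, (permWeight m #(X ∆ Q) : ℝ) := by
  refine forall_congr' fun a => forall_congr' fun X => imp_congr_right fun hX => ?_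
  rw [← insert_empty (a := a), hH.lamW_dualFam_insert_eq_sum_pivotalSets (notMem_empty a),
    hH.lamW_dualFam_insert_eq_sum_pivotalSets hX]
  simp only [← bot_eq_empty, bot_symmDiff]

lemma permWeight_succ_le {d : ℕ} (h : 2 * d + 1 < m) :
    permWeight m (d + 1) ≤ permWeight m d := by
  obtain ⟨k, hk⟩ : ∃ k, m - 1 - d = k + 1 := ⟨m - 1 - d - 1, by omega⟩
  rw [permWeight, permWeight, hk, show m - 1 - (d + 1) = k by omega, Nat.factorial_succ,
    Nat.factorial_succ k]
  calc (d + 1) * d ! * k ! = d ! * ((d + 1) * k !) := by ring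
    _ ≤ d ! * ((k + 1) * k !) := by gcongr; omega

lemma permWeight_le_of_le {d e : ℕ} (hde : d ≤ e) (he : 2 * e < m) :
    permWeight m e ≤ permWeight m d := by
  induction e, hde using Nat.le_induction with
  | base => exact le_rfl
  | succ e hde ih => exact (permWeight_succ_le (by omega)).trans (ih (by omega))

section middle
variable {n d : ℕ}

lemma permWeight_middle_le (hd : d ≤ 2 * n) :
    permWeight (2 * n + 1) n ≤ permWeight (2 * n + 1) d := by
  rcases le_total d n with h | h
  · exact permWeight_le_of_le h (by omega)
  · rw [← permWeight_sub (2 * n + 1) (d := d) (by omega)]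
    exact permWeight_le_of_le (by omega) (by omega)

lemma permWeight_pred_middle_le (hd : d ≤ 2 * n) (hdn : d ≠ n) :
    permWeight (2 * n + 1) (n - 1) ≤ permWeight (2 * n + 1) d := by
  rcases lt_or_gt_of_ne hdn with h | h
  · exact permWeight_le_of_le (by omega) (by omega)
  · rw [← permWeight_sub (2 * n + 1) (d := d) (by omega)]
    exact permWeight_le_of_le (by omega) (by omega)

lemma permWeight_succ_middle (hn : n + 1 ≤ 2 * n) :
    permWeight (2 * n + 1) (n + 1) = permWeight (2 * n + 1) (n - 1) := by
  rw [← permWeight_sub (2 * n + 1) hn]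
  congr 1
  omega

end middle

lemma card_symmDiff_add_two_mul_card_inter {α : Type*} [DecidableEq α] (X Y : Finset α) :
    #(X ∆ Y) + 2 * #(X ∩ Y) = #X + #Y := by
  have hsub : X ∩ Y ⊆ X ∪ Y := inter_subset_left.trans subset_union_left
  rw [symmDiff_eq_sup_sdiff_inf, sup_eq_union, inf_eq_inter, card_sdiff_of_subset hsub,
    ← card_union_add_card_inter]
  have := card_le_card hsub
  omega

/-- For odd `#X`, a central `Q` (`#Q = n`) has `#(X ∆ Q) ≠ n` and so gains at least this much
weight, while any other `Q` loses at most this much. -/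
def parityGap (n k : ℕ) : ℝ :=
  if Even k then 0 else (permWeight (2 * n + 1) (n - 1) : ℝ) - permWeight (2 * n + 1) n

section parityGap
variable {α : Type*} [DecidableEq α] {n : ℕ} {X Q : Finset α}

lemma parityGap_nonneg (n k : ℕ) : 0 ≤ parityGap n k := by
  unfold parityGap
  split_ifs
  · exact le_rfl
  · exact sub_nonneg.2 (by exact_mod_cast permWeight_middle_le (by omega))

lemma parityGap_le_of_card_eq (hXQ : #(X ∆ Q) ≤ 2 * n) (hQ : #Q = n) :
    parityGap n #X ≤
      (permWeight (2 * n + 1) #(X ∆ Q) : ℝ) - permWeight (2 * n + 1) #Q := by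
  have hpar := card_symmDiff_add_two_mul_card_inter X Q
  have hmid : (permWeight (2 * n + 1) n : ℝ) ≤ permWeight (2 * n + 1) #(X ∆ Q) := by
    exact_mod_cast permWeight_middle_le hXQ
  unfold parityGap
  rw [hQ]
  split_ifs with hev <;> rw [Nat.even_iff] at hev
  · linarith
  · have : (permWeight (2 * n + 1) (n - 1) : ℝ) ≤ permWeight (2 * n + 1) #(X ∆ Q) := by
      exact_mod_cast permWeight_pred_middle_le hXQ (by omega)
    linarith

lemma neg_parityGap_le_of_card_ne (hXQ : #(X ∆ Q) ≤ 2 * n) (hQ : #Q ≤ 2 * n)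
    (hQ₁ : n ≤ #Q + 1) (hQ₂ : #Q ≤ n + 1) (hQn : #Q ≠ n) :
    -parityGap n #X ≤
      (permWeight (2 * n + 1) #(X ∆ Q) : ℝ) - permWeight (2 * n + 1) #Q := by
  have hpar := card_symmDiff_add_two_mul_card_inter X Q
  have hQ' : permWeight (2 * n + 1) #Q = permWeight (2 * n + 1) (n - 1) := by
    rcases (show #Q = n - 1 ∨ #Q = n + 1 by omega) with h | h
    · rw [h]
    · rw [h, permWeight_succ_middle (by omega)]
  have hmid : (permWeight (2 * n + 1) n : ℝ) ≤ permWeight (2 * n + 1) #(X ∆ Q) := by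
    exact_mod_cast permWeight_middle_le hXQ
  unfold parityGap
  rw [hQ']
  split_ifs with hev <;> rw [Nat.even_iff] at hev
  · have : (permWeight (2 * n + 1) (n - 1) : ℝ) ≤ permWeight (2 * n + 1) #(X ∆ Q) := by
      exact_mod_cast permWeight_pred_middle_le hXQ (by omega)
    linarith
  · linarith

end parityGap

theorem sum_permWeight_card_le_sum_permWeight_card_symmDiff {α : Type*} [DecidableEq α] {n : ℕ}
    {U X : Finset α} {B : Finset (Finset α)} (hU : #U = 2 * n) (hX : X ⊆ U)
    (hB : ∀ Q ∈ B, Q ⊆ U ∧ n ≤ #Q + 1 ∧ #Q ≤ n + 1)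
    (hcard : #{Q ∈ B | #Q ≠ n} ≤ #{Q ∈ B | #Q = n}) :
    ∑ Q ∈ B, (permWeight (2 * n + 1) #Q : ℝ) ≤
      ∑ Q ∈ B, (permWeight (2 * n + 1) #(X ∆ Q) : ℝ) := by
  have hsize (Q : Finset α) (hQ : Q ∈ B) : #(X ∆ Q) ≤ 2 * n ∧ #Q ≤ 2 * n := by
    obtain ⟨hQU, -⟩ := hB Q hQ
    exact ⟨hU ▸ card_le_card (symmDiff_le_sup.trans (sup_le hX hQU)), hU ▸ card_le_card hQU⟩
  have hgain := card_nsmul_le_sum {Q ∈ B | #Q = n} _ (parityGap n #X) fun Q hQ =>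
    parityGap_le_of_card_eq (hsize Q (mem_filter.1 hQ).1).1 (mem_filter.1 hQ).2
  have hloss := card_nsmul_le_sum {Q ∈ B | #Q ≠ n} _ (-parityGap n #X) fun Q hQ =>
    neg_parityGap_le_of_card_ne (hsize Q (mem_filter.1 hQ).1).1 (hsize Q (mem_filter.1 hQ).1).2
      (hB Q (mem_filter.1 hQ).1).2.1 (hB Q (mem_filter.1 hQ).1).2.2 (mem_filter.1 hQ).2
  have hcmp :
      (#{Q ∈ B | #Q ≠ n} : ℝ) * parityGap n #X ≤ #{Q ∈ B | #Q = n} * parityGap n #X :=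
    mul_le_mul_of_nonneg_right (by exact_mod_cast hcard) (parityGap_nonneg n #X)
  rw [nsmul_eq_mul] at hgain hloss
  rw [← sub_nonneg, ← sum_sub_distrib, ← sum_filter_add_sum_filter_not B (fun Q => #Q = n)]
  linarith

lemma isMaxIntersecting_of_mem_or_compl_mem {H : Finset (Finset (Fin m))}
    (hH : IsIntersecting H) (h : ∀ A, A ∈ H ∨ Aᶜ ∈ H) : IsMaxIntersecting H := by
  refine ⟨hH, fun H' hH' hsub A hA => (h A).resolve_right fun hAc => ?_⟩
  simpa using hH' A hA Aᶜ (hsub hAc)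

section nearCentral
variable {n : ℕ} {G : Finset (Finset (Fin (2 * n + 1)))}

def upperHalf (n : ℕ) : Finset (Finset (Fin (2 * n + 1))) := {A | n + 1 ≤ #A}

lemma card_compl_add_card_fin (A : Finset (Fin (2 * n + 1))) : #Aᶜ + #A = 2 * n + 1 := by
  rw [card_compl_add_card, Fintype.card_fin]

lemma upperHalf_intersecting : IsIntersecting (upperHalf n) := by
  intro A hA B hB
  simp only [upperHalf, mem_filter, mem_univ, true_and] at hA hB
  have := card_union_add_card_inter A B
  have := card_le_univ (A ∪ B)
  rw [Fintype.card_fin] at this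
  exact card_pos.1 (by omega)

lemma eq_upperHalf_of_central {F : Finset (Finset (Fin (2 * n + 1)))} (hF : IsMaxIntersecting F)
    (hcentral : ∀ A ∈ F, 2 * n + 1 ≤ 2 * #A) : F = upperHalf n := by
  have hsub : F ⊆ upperHalf n := fun A hA => by
    have := hcentral A hA
    simp only [upperHalf, mem_filter, mem_univ, true_and]
    omega
  exact hsub.antisymm (hF.2 _ upperHalf_intersecting hsub)

def nearCentral (n : ℕ) (G : Finset (Finset (Fin (2 * n + 1)))) :
    Finset (Finset (Fin (2 * n + 1))) :=
  (upperHalf n \ dualFam G) ∪ G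

lemma mem_nearCentral {C : Finset (Fin (2 * n + 1))} :
    C ∈ nearCentral n G ↔ (n + 1 ≤ #C ∧ Cᶜ ∉ G) ∨ C ∈ G := by
  simp [nearCentral, upperHalf, mem_dualFam]

lemma nearCentral_intersecting (hGi : IsIntersecting G) (hGk : ∀ A ∈ G, #A = n) :
    IsIntersecting (nearCentral n G) := by
  -- if `A` misses `B ∈ G` then `B ⊆ Aᶜ`, and `#Aᶜ ≤ n = #B` forces `B = Aᶜ`
  have key (A B : Finset (Fin (2 * n + 1))) (hA : n + 1 ≤ #A) (hAc : Aᶜ ∉ G) (hB : B ∈ G) :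
      (A ∩ B).Nonempty := by
    by_contra hAB
    have hBA : B ⊆ Aᶜ := fun x hx =>
      mem_compl.2 fun hxA => hAB ⟨x, mem_inter.2 ⟨hxA, hx⟩⟩
    refine hAc (eq_of_subset_of_card_le hBA ?_ ▸ hB)
    have := card_compl_add_card_fin A
    rw [hGk B hB]
    omega
  intro A hA B hB
  rw [mem_nearCentral] at hA hB
  rcases hA with ⟨hA, hAc⟩ | hA <;> rcases hB with ⟨hB, hBc⟩ | hB
  · exact upperHalf_intersecting A (by simpa [upperHalf] using hA)
      B (by simpa [upperHalf] using hB)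
  · exact key A B hA hAc hB
  · exact inter_comm B A ▸ key B A hB hBc hA
  · exact hGi A hA B hB

lemma isMaxIntersecting_nearCentral (hGi : IsIntersecting G) (hGk : ∀ A ∈ G, #A = n) :
    IsMaxIntersecting (nearCentral n G) := by
  refine isMaxIntersecting_of_mem_or_compl_mem (nearCentral_intersecting hGi hGk) fun A => ?_
  simp only [mem_nearCentral, compl_compl]
  have := card_compl_add_card_fin A
  by_cases hA : n + 1 ≤ #A
  · by_cases hAc : Aᶜ ∈ G
    · exact Or.inr (Or.inr hAc)
    · exact Or.inl (Or.inl ⟨hA, hAc⟩)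
  · by_cases hAG : A ∈ G
    · exact Or.inl (Or.inr hAG)
    · exact Or.inr (Or.inl ⟨by omega, hAG⟩)

lemma bounds_of_mem_pivotalSets_nearCentral (hGk : ∀ A ∈ G, #A = n) {a : Fin (2 * n + 1)}
    {Q : Finset (Fin (2 * n + 1))} (hQ : Q ∈ pivotalSets (nearCentral n G) a) :
    Q ⊆ univ.erase a ∧ n ≤ #Q + 1 ∧ #Q ≤ n + 1 := by
  simp only [pivotalSets, mem_filter, mem_powerset, mem_nearCentral] at hQ
  obtain ⟨hQU, hins, hQ⟩ := hQ
  refine ⟨hQU, ?_, ?_⟩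
  · have := card_insert_le a Q
    rcases hins with ⟨h, -⟩ | h
    · omega
    · have := hGk _ h
      omega
  · by_contra! h
    refine hQ (Or.inl ⟨by omega, fun hc => ?_⟩)
    have := hGk _ hc
    have := card_compl_add_card_fin Q
    omega

lemma filter_card_ne_pivotalSets_nearCentral_subset (a : Fin (2 * n + 1)) :
    {Q ∈ pivotalSets (nearCentral n G) a | #Q ≠ n} ⊆
      (G.filter (a ∈ ·)).image (·.erase a) ∪ (G.filter (a ∈ ·)).image compl := by
  intro Q hQ
  simp only [pivotalSets, mem_filter, mem_powerset, mem_nearCentral] at hQ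
  obtain ⟨⟨hQU, hins, hQ⟩, hQn⟩ := hQ
  have haQ : a ∉ Q := fun h => by simpa using hQU h
  rw [mem_union, mem_image, mem_image]
  rcases hins with ⟨hcard, -⟩ | hins
  · refine Or.inr ⟨Qᶜ, mem_filter.2 ⟨?_, mem_compl.2 haQ⟩, compl_compl Q⟩
    by_contra hc
    rw [card_insert_of_notMem haQ] at hcard
    exact hQ (Or.inl ⟨by omega, hc⟩)
  · exact Or.inl ⟨insert a Q, mem_filter.2 ⟨hins, mem_insert_self a Q⟩, erase_insert haQ⟩

lemma powersetCard_subset_pivotalSets_nearCentral (a : Fin (2 * n + 1)) :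
    powersetCard n (univ.erase a) ⊆ {Q ∈ pivotalSets (nearCentral n G) a | #Q = n} ∪
      (G.filter (a ∉ ·) ∪ (G.filter (a ∉ ·)).image fun B => (insert a B)ᶜ) := by
  intro Q hQ
  obtain ⟨hQU, hQn⟩ := mem_powersetCard.1 hQ
  have haQ : a ∉ Q := fun h => by simpa using hQU h
  by_cases hQG : Q ∈ G
  · exact mem_union_right _ (mem_union_left _ (mem_filter.2 ⟨hQG, haQ⟩))
  by_cases hc : (insert a Q)ᶜ ∈ G
  · refine mem_union_right _ (mem_union_right _ (mem_image.2
      ⟨(insert a Q)ᶜ, mem_filter.2 ⟨hc, by simp⟩, ?_⟩))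
    rw [compl_insert, compl_compl, erase_insert haQ]
  refine mem_union_left _ (mem_filter.2 ⟨?_, hQn⟩)
  simp only [pivotalSets, mem_filter, mem_powerset, mem_nearCentral]
  refine ⟨hQU, Or.inl ⟨by rw [card_insert_of_notMem haQ]; omega, hc⟩, ?_⟩
  rintro (⟨h, -⟩ | h)
  · omega
  · exact hQG h

lemma card_pivotalSets_nearCentral_le (hGcard : 2 * #G ≤ (2 * n).choose n)
    (a : Fin (2 * n + 1)) :
    #{Q ∈ pivotalSets (nearCentral n G) a | #Q ≠ n} ≤
      #{Q ∈ pivotalSets (nearCentral n G) a | #Q = n} := by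
  have hsplit : #(G.filter (a ∈ ·)) + #(G.filter (a ∉ ·)) = #G :=
    card_filter_add_card_filter_not _
  have hoff := (card_le_card (filter_card_ne_pivotalSets_nearCentral_subset (G := G) a)).trans
    ((card_union_le _ _).trans (add_le_add card_image_le card_image_le))
  have hmid := (card_le_card (powersetCard_subset_pivotalSets_nearCentral (G := G) a)).trans
    ((card_union_le _ _).trans
      (add_le_add le_rfl ((card_union_le _ _).trans (add_le_add le_rfl card_image_le))))
  rw [card_powersetCard, card_erase_of_mem (mem_univ a), card_univ, Fintype.card_fin,
    Nat.add_sub_cancel] at hmid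
  omega

lemma emptyMinimal_nearCentral (hGi : IsIntersecting G) (hGk : ∀ A ∈ G, #A = n)
    (hGcard : 2 * #G ≤ (2 * n).choose n) : EmptyMinimal (nearCentral n G) := by
  refine (isMaxIntersecting_nearCentral hGi hGk).emptyMinimal_iff.2 fun a X hX => ?_
  refine sum_permWeight_card_le_sum_permWeight_card_symmDiff (U := univ.erase a) ?_
    (fun x hx => mem_erase.2 ⟨by rintro rfl; exact hX hx, mem_univ x⟩)
    (fun Q hQ => bounds_of_mem_pivotalSets_nearCentral hGk hQ)
    (card_pivotalSets_nearCentral_le hGcard a)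
  rw [card_erase_of_mem (mem_univ a), card_univ, Fintype.card_fin, Nat.add_sub_cancel]

end nearCentral

theorem near_central_emptyMinimal_general (n : ℕ)
    (F : Finset (Finset (Fin (2 * n + 1)))) (hF : IsMaxIntersecting F)
    (hcentral : ∀ A ∈ F, 2 * n + 1 ≤ 2 * A.card)
    (G : Finset (Finset (Fin (2 * n + 1)))) (hGi : IsIntersecting G)
    (hGk : ∀ A ∈ G, A.card = n)
    (hGcard : 2 * G.card ≤ Nat.choose (2 * n) n) :
    IsMaxIntersecting ((F \ dualFam G) ∪ G) ∧ EmptyMinimal ((F \ dualFam G) ∪ G) := by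
  obtain rfl := eq_upperHalf_of_central hF hcentral
  exact ⟨isMaxIntersecting_nearCentral hGi hGk, emptyMinimal_nearCentral hGi hGk hGcard⟩

/-- Modifying a central maximal intersecting family of `P([2n+1])` by a small intersecting
family of `n`-sets yields an `∅`-minimal maximal intersecting family. -/
theorem near_central_emptyMinimal (n : ℕ) (hn : 1 ≤ n)
    (F : Finset (Finset (Fin (2 * n + 1)))) (hF : IsMaxIntersecting F)
    (hcentral : ∀ A ∈ F, 2 * n + 1 ≤ 2 * A.card)
    (G : Finset (Finset (Fin (2 * n + 1)))) (hGi : IsIntersecting G)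
    (hGk : ∀ A ∈ G, A.card = n)
    (hGcard : 2 * G.card ≤ Nat.choose (2 * n) n) :
    IsMaxIntersecting ((F \ dualFam G) ∪ G) ∧ EmptyMinimal ((F \ dualFam G) ∪ G) :=
  near_central_emptyMinimal_general n F hF hcentral G hGi hGk hGcard
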